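/- Let D > 0, let M ≥ 1, let A ⊆ [0, D] be a measurable set, and let W ∈ ℝ^{M×M} be an orthogonal matrix whose j-th column w^j satisfies A_arr w^j = ν_j w^j with ν_j ≠ 0 for every j. Let C ∈ ℂ^M and let Π(x) = Σ_{k=1}^M C_k X_k(x) for x ∈ [0, D] (the passive, received-field case). Define the vector S ∈ ℂ^M by S_n = ν_n^{-1} ∫_A Π(x) s_n(x) dx. Then the projected response vector Q = W S satisfies Q_n = C_n for all 1 ≤ n ≤ M, i.e. it equals the vector of projections ∫_0^D Π(x) X_n(x) dx obtained from an array spanning the whole cross-section [0, D]. -/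

import Mathlib

/-!
Expanding `Π` in the modes, `∫_A Π s_j = Σ_k C_k (A_arr w^j)_k = ν_j Σ_k C_k W_kj`, so `S = Wᵀ C`
and `Q = W Wᵀ C = C`. On the full cross-section the modes are orthonormal (product-to-sum turns
`X_m X_n` into cosines with frequencies `(m ∓ n)π/D`, which integrate to `0` over `[0, D]` unless
`m = n`), so `∫_0^D Π X_n = C_n` as well.
-/

open MeasureTheory Real Finset Matrix

/-- Vertical mode `X_n(x) = sqrt(2/D) * sin(nπx/D)`. -/
noncomputable def vmode (D : ℝ) (n : ℕ) (x : ℝ) : ℝ :=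
  Real.sqrt (2 / D) * Real.sin (n * Real.pi * x / D)

/-- Array matrix `(A_arr)_{mn} = ∫_A X_m X_n`. -/
noncomputable def arrMatrix (D : ℝ) (M : ℕ) (A : Set ℝ) : Matrix (Fin M) (Fin M) ℝ :=
  fun m n => ∫ x in A, vmode D (m.1 + 1) x * vmode D (n.1 + 1) x

/-- Trigonometric polynomial `s(x) = Σ_i w_i X_i(x)`. -/
noncomputable def trigPoly (D : ℝ) (M : ℕ) (w : Fin M → ℝ) (x : ℝ) : ℝ :=
  ∑ i : Fin M, w i * vmode D (i.1 + 1) x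

theorem continuous_vmode (D : ℝ) (n : ℕ) : Continuous (vmode D n) := by
  unfold vmode; fun_prop

theorem continuous_trigPoly (D : ℝ) (M : ℕ) (w : Fin M → ℝ) : Continuous (trigPoly D M w) :=
  continuous_finsetSum _ fun _ _ => continuous_const.mul (continuous_vmode _ _)

theorem integral_cos_int_mul_pi_div {D : ℝ} (hD : 0 < D) (k : ℤ) :
    ∫ x in (0 : ℝ)..D, cos (k * π / D * x) = if k = 0 then D else 0 := by
  split_ifs with hk
  · simp [hk]
  · have hc : (k : ℝ) * π / D ≠ 0 := by positivity
    rw [intervalIntegral.integral_comp_mul_left (fun x => cos x) hc, integral_cos,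
      div_mul_cancel₀ _ hD.ne', sin_int_mul_pi]
    simp

theorem vmode_mul_vmode {D : ℝ} (hD : 0 ≤ D) (m n : ℕ) (x : ℝ) :
    vmode D m x * vmode D n x =
      (cos (((m - n : ℤ) : ℝ) * π / D * x) - cos (((m + n : ℤ) : ℝ) * π / D * x)) / D := by
  have hsq : √(2 / D) * √(2 / D) = 2 / D := mul_self_sqrt (by positivity)
  have hsub : ((m - n : ℤ) : ℝ) * π / D * x = m * π * x / D - n * π * x / D := by
    push_cast; ring
  have hadd : ((m + n : ℤ) : ℝ) * π / D * x = m * π * x / D + n * π * x / D := by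
    push_cast; ring
  rw [hsub, hadd, cos_sub, cos_add, vmode, vmode]
  linear_combination (sin (m * π * x / D) * sin (n * π * x / D)) * hsq

theorem integral_vmode_mul_vmode {D : ℝ} (hD : 0 < D) {m n : ℕ} (hn : n ≠ 0) :
    ∫ x in Set.Icc 0 D, vmode D m x * vmode D n x = if m = n then 1 else 0 := by
  have hcos (k : ℤ) : IntervalIntegrable (fun x => cos (k * π / D * x)) volume 0 D :=
    (by fun_prop : Continuous _).intervalIntegrable _ _
  have hsum : (m + n : ℤ) ≠ 0 := by omega
  rw [integral_Icc_eq_integral_Ioc, ← intervalIntegral.integral_of_le hD.le]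
  simp_rw [vmode_mul_vmode hD.le]
  rw [intervalIntegral.integral_div, intervalIntegral.integral_sub (hcos _) (hcos _),
    integral_cos_int_mul_pi_div hD, integral_cos_int_mul_pi_div hD, if_neg hsum]
  by_cases h : m = n
  · simp [h, hD.ne']
  · have : (m - n : ℤ) ≠ 0 := by omega
    simp [h, this]

theorem integral_sum_mul_ofReal {α ι : Type*} [MeasurableSpace α] [Fintype ι] {μ : Measure α}
    (c : ι → ℂ) (φ : ι → α → ℝ) (ψ : α → ℝ) (h : ∀ k, Integrable (fun x => φ k x * ψ x) μ) :
    ∫ x, (∑ k, c k * (φ k x : ℂ)) * (ψ x : ℂ) ∂μ = ∑ k, c k * ((∫ x, φ k x * ψ x ∂μ : ℝ) : ℂ) := by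
  simp_rw [Finset.sum_mul, mul_assoc, ← Complex.ofReal_mul]
  rw [integral_finsetSum univ fun k _ => ?_]
  · simp_rw [integral_const_mul, integral_complex_ofReal]
  · exact (h k).ofReal.const_mul (c k)

theorem integral_vmode_mul_trigPoly {D : ℝ} {A : Set ℝ} (hA : A ⊆ Set.Icc 0 D) {M : ℕ}
    (w : Fin M → ℝ) (k : Fin M) :
    ∫ x in A, vmode D (k.1 + 1) x * trigPoly D M w x = (arrMatrix D M A *ᵥ w) k := by
  have hint (i : Fin M) : IntegrableOn (fun x => vmode D (k.1 + 1) x * vmode D (i.1 + 1) x) A :=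
    ((continuous_vmode _ _).mul (continuous_vmode _ _)).integrableOn_Icc.mono_set hA
  simp_rw [trigPoly, Finset.mul_sum, mul_left_comm (vmode D _ _) (w _)]
  rw [integral_finsetSum _ fun i _ => (hint i).const_mul (w i)]
  simp_rw [integral_const_mul, mulVec, dotProduct, arrMatrix, mul_comm (w _)]

theorem integral_sum_vmode_mul_trigPoly {D : ℝ} {A : Set ℝ} (hA : A ⊆ Set.Icc 0 D) {M : ℕ}
    (C : Fin M → ℂ) (w : Fin M → ℝ) :
    ∫ x in A, (∑ k : Fin M, C k * (vmode D (k.1 + 1) x : ℂ)) * (trigPoly D M w x : ℂ) =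
      ∑ k, C k * ((arrMatrix D M A *ᵥ w) k : ℂ) := by
  rw [integral_sum_mul_ofReal C (fun k => vmode D (k.1 + 1)) (trigPoly D M w) fun k =>
    ((continuous_vmode _ _).mul (continuous_trigPoly _ _ _)).integrableOn_Icc.mono_set hA]
  simp_rw [integral_vmode_mul_trigPoly hA]

theorem integral_Icc_sum_vmode_mul_vmode {D : ℝ} (hD : 0 < D) {M : ℕ} (C : Fin M → ℂ)
    (n : Fin M) :
    ∫ x in Set.Icc 0 D, (∑ k : Fin M, C k * (vmode D (k.1 + 1) x : ℂ)) *
      (vmode D (n.1 + 1) x : ℂ) = C n := by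
  rw [integral_sum_mul_ofReal C (fun k => vmode D (k.1 + 1)) (vmode D (n.1 + 1)) fun k =>
    ((continuous_vmode _ _).mul (continuous_vmode _ _)).integrableOn_Icc]
  simp [integral_vmode_mul_vmode hD n.1.succ_ne_zero, Fin.val_inj, apply_ite Complex.ofReal]

theorem stmt_3_general (D : ℝ) (hD : 0 < D) (M : ℕ)
    (A : Set ℝ) (hAsub : A ⊆ Set.Icc 0 D)
    (W : Matrix (Fin M) (Fin M) ℝ)
    (hWorth : W * Wᵀ = 1 ∧ Wᵀ * W = 1)
    (ν : Fin M → ℝ) (hν : ∀ j, ν j ≠ 0)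
    (heig : ∀ j, (arrMatrix D M A).mulVec (fun i => W i j) = fun i => ν j * W i j)
    (C : Fin M → ℂ)
    (Pfun : ℝ → ℂ)
    (hP : ∀ x, Pfun x = ∑ k : Fin M, C k * (vmode D (k.1 + 1) x : ℂ))
    (S : Fin M → ℂ)
    (hS : ∀ n, S n = ((ν n : ℝ) : ℂ)⁻¹ *
      ∫ x in A, Pfun x * (trigPoly D M (fun i => W i n) x : ℂ))
    (Q : Fin M → ℂ)
    (hQ : Q = (W.map ((↑) : ℝ → ℂ)).mulVec S) :
    ∀ n : Fin M, Q n = C n ∧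
      Q n = ∫ x in Set.Icc (0:ℝ) D, Pfun x * (vmode D (n.1 + 1) x : ℂ) := by
  have hP_eq : Pfun = fun x => ∑ k : Fin M, C k * (vmode D (k.1 + 1) x : ℂ) := funext hP
  have hS_eq : S = (W.map ((↑) : ℝ → ℂ))ᵀ *ᵥ C := by
    funext n
    have hν_ne : ((ν n : ℝ) : ℂ) ≠ 0 := Complex.ofReal_ne_zero.mpr (hν n)
    rw [hS, hP_eq, integral_sum_vmode_mul_trigPoly hAsub, heig, mulVec, dotProduct, mul_sum]
    refine sum_congr rfl fun k _ => ?_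
    simp only [transpose_apply, map_apply, Complex.ofReal_mul]
    field_simp
  have hWW : W.map ((↑) : ℝ → ℂ) * (W.map ((↑) : ℝ → ℂ))ᵀ = 1 := by
    rw [← transpose_map]
    exact (Matrix.map_mul (f := Complex.ofRealHom)).symm.trans (by simp [hWorth.1])
  have hQC : Q = C := by rw [hQ, hS_eq, mulVec_mulVec, hWW, one_mulVec]
  intro n
  rw [hQC, hP_eq, integral_Icc_sum_vmode_mul_vmode hD]
  exact ⟨rfl, rfl⟩

/-- passive case; the projected response vector `Q = W S` recovers `Q_n = C_n`,
which equals the full-aperture projection `∫_0^D Π X_n`. -/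
theorem stmt_3 (D : ℝ) (hD : 0 < D) (M : ℕ) (hM : 1 ≤ M)
    (A : Set ℝ) (hAmeas : MeasurableSet A) (hAsub : A ⊆ Set.Icc 0 D)
    (W : Matrix (Fin M) (Fin M) ℝ)
    (hWorth : W * Wᵀ = 1 ∧ Wᵀ * W = 1)
    (ν : Fin M → ℝ) (hν : ∀ j, ν j ≠ 0)
    (heig : ∀ j, (arrMatrix D M A).mulVec (fun i => W i j) = fun i => ν j * W i j)
    (C : Fin M → ℂ)
    (Pfun : ℝ → ℂ)
    (hP : ∀ x, Pfun x = ∑ k : Fin M, C k * (vmode D (k.1 + 1) x : ℂ))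
    (S : Fin M → ℂ)
    (hS : ∀ n, S n = ((ν n : ℝ) : ℂ)⁻¹ *
      ∫ x in A, Pfun x * (trigPoly D M (fun i => W i n) x : ℂ))
    (Q : Fin M → ℂ)
    (hQ : Q = (W.map ((↑) : ℝ → ℂ)).mulVec S) :
    ∀ n : Fin M, Q n = C n ∧
      Q n = ∫ x in Set.Icc (0:ℝ) D, Pfun x * (vmode D (n.1 + 1) x : ℂ) :=
  stmt_3_general D hD M A hAsub W hWorth ν hν heig C Pfun hP S hS Q hQ
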